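/- arXiv:2410.08722 — 2 statements merged into one kernel-verified Lean document; each statement's English description precedes it below -/
import Mathlib

section
/- Let U = {u¹, …, uᵏ} ⊆ ℝ² be a finite nonempty set with u¹₁ < u²₁ < … < uᵏ₁ and u¹₂ > u²₂ > … > uᵏ₂ (a sorted antichain for the componentwise order). Then for every y ∈ ℝ², no point of U weakly dominates y (i.e., for all u ∈ U, not (u ≤ y componentwise)) if and only if y₁ < u¹₁, or y₂ < uᵏ₂, or there exists an index i with 1 ≤ i ≤ k−1 such that y₁ < uⁱ⁺¹₁ and y₂ < uⁱ₂. -/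
/-- Decomposition of the region not dominated by a sorted antichain `U = {u 0, …, u (k-1)}`
in `ℝ²` (first coordinates strictly increasing, second strictly decreasing): a point `y` is
weakly dominated by no point of `U` iff `y₁ < (u 0)₁`, or `y₂ < (u (k-1))₂`, or there are two
consecutive points `u i, u (i+1)` with `y₁ < (u (i+1))₁` and `y₂ < (u i)₂` (local nadir
points). -/
theorem not_dominated_iff_local_nadir
    (k : ℕ) (hk : 1 ≤ k) (u : ℕ → ℝ × ℝ)
    (hsort1 : ∀ i j, i < j → j < k → (u i).1 < (u j).1)
    (hsort2 : ∀ i j, i < j → j < k → (u j).2 < (u i).2)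
    (y : ℝ × ℝ) :
    (∀ i < k, ¬ ((u i).1 ≤ y.1 ∧ (u i).2 ≤ y.2)) ↔
      (y.1 < (u 0).1 ∨ y.2 < (u (k - 1)).2 ∨
        ∃ i, i + 1 < k ∧ y.1 < (u (i + 1)).1 ∧ y.2 < (u i).2) := by
  constructor
  · intro h
    by_cases h0 : y.1 < (u 0).1
    · exact Or.inl h0
    by_cases hlast : y.2 < (u (k - 1)).2
    · exact Or.inr (Or.inl hlast)
    push_neg at h0 hlast
    refine Or.inr (Or.inr ?_)
    classical
    set P : ℕ → Prop := fun i => (u i).1 ≤ y.1 with hP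
    set m := Nat.findGreatest P (k - 1) with hm
    have hm0 : P m := Nat.findGreatest_spec (Nat.zero_le _) h0
    have hmle : m ≤ k - 1 := Nat.findGreatest_le _
    have hmk : m < k := lt_of_le_of_lt hmle (Nat.sub_lt hk one_pos)
    have hy2 : y.2 < (u m).2 := by
      have := h m hmk
      push_neg at this
      exact this hm0
    have hmk1 : m + 1 < k := by
      rcases lt_or_eq_of_le hmle with h' | h'
      · omega
      · exfalso
        rw [h'] at hy2
        exact absurd hlast (not_le.mpr hy2)
    refine ⟨m, hmk1, ?_, hy2⟩
    have hb' : m + 1 ≤ k - 1 := by omega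
    have := Nat.findGreatest_is_greatest (P := P) (hm ▸ Nat.lt_succ_self m) hb'
    simpa [hP, not_le] using this
  · rintro (h0 | hlast | ⟨i, hik, hy1, hy2⟩) j hj ⟨ha, hb⟩
    · have : (u 0).1 ≤ (u j).1 := by
        rcases Nat.eq_zero_or_pos j with rfl | hjpos
        · exact le_refl _
        · exact le_of_lt (hsort1 0 j hjpos hj)
      linarith
    · have : (u (k - 1)).2 ≤ (u j).2 := by
        rcases eq_or_lt_of_le (Nat.le_sub_one_of_lt hj) with h' | h'
        · rw [h']
        · exact le_of_lt (hsort2 j (k - 1) h' (Nat.sub_lt hk one_pos))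
      linarith
    · rcases le_or_gt j i with hji | hji
      · have : (u i).2 ≤ (u j).2 := by
          rcases eq_or_lt_of_le hji with rfl | h'
          · exact le_refl _
          · exact le_of_lt (hsort2 j i h' (by omega))
        linarith
      · have : (u (i + 1)).1 ≤ (u j).1 := by
          rcases eq_or_lt_of_le (Nat.succ_le_of_lt hji) with h' | h'
          · exact le_of_eq (by rw [← h'])
          · exact le_of_lt (hsort1 (i + 1) j h' hj)
        linarith
end

section
/- Let L ⊆ ℝ² and Y' ⊆ ℝ² with Y' ⊆ L + ℝ²≥0 (L is a valid lower bound set for Y'), and suppose there exist M₁, M₂ ∈ ℝ with y₁ ≤ M₁ and y₂ ≤ M₂ for all y ∈ Y'. Let U = {u¹, …, uᵏ} ⊆ ℝ² be a finite nonempty set with u¹₁ < … < uᵏ₁ and u¹₂ > … > uᵏ₂, and define the augmented local nadir points n⁰ = (u¹₁, M₂), nⁱ = (uⁱ⁺¹₁, uⁱ₂) for i = 1, …, k−1, and nᵏ = (M₁, uᵏ₂). If nⁱ ∉ L + ℝ²≥0 for every i = 0, 1, …, k, then every point of Y' is weakly dominated by U: for all y ∈ Y' there exists u ∈ U with u ≤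 y componentwise. -/
open Pointwise

lemma upclosed_aux (L : Set (ℝ × ℝ)) {y z : ℝ × ℝ}
    (hy : y ∈ L + {v : ℝ × ℝ | 0 ≤ v.1 ∧ 0 ≤ v.2})
    (h1 : y.1 ≤ z.1) (h2 : y.2 ≤ z.2) :
    z ∈ L + {v : ℝ × ℝ | 0 ≤ v.1 ∧ 0 ≤ v.2} := by
  obtain ⟨a, ha, b, hb, hab⟩ := hy
  refine ⟨a, ha, b + (z - y), ⟨?_, ?_⟩, ?_⟩
  · simp only [Prod.fst_add, Prod.fst_sub]
    have := hb.1; linarith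
  · simp only [Prod.snd_add, Prod.snd_sub]
    have := hb.2; linarith
  · rw [← hab]; module

/-- Soundness of fathoming by dominance: if `L` is a valid lower bound set for `Y'`
(`Y' ⊆ L + ℝ²≥0`), `Y'` is bounded above componentwise by `M₁, M₂`, and no augmented
local nadir point of the sorted antichain `U = {u 0, …, u (k-1)}` lies in `L + ℝ²≥0`,
then every point of `Y'` is weakly dominated by some point of `U`. -/
theorem fathoming_by_dominance_sound
    (L Y' : Set (ℝ × ℝ))
    (hLB : Y' ⊆ L + {v : ℝ × ℝ | 0 ≤ v.1 ∧ 0 ≤ v.2})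
    (M₁ M₂ : ℝ) (hM : ∀ y ∈ Y', y.1 ≤ M₁ ∧ y.2 ≤ M₂)
    (k : ℕ) (hk : 1 ≤ k) (u : ℕ → ℝ × ℝ)
    (hsort1 : ∀ i j, i < j → j < k → (u i).1 < (u j).1)
    (hsort2 : ∀ i j, i < j → j < k → (u j).2 < (u i).2)
    (hn0 : ((u 0).1, M₂) ∉ L + {v : ℝ × ℝ | 0 ≤ v.1 ∧ 0 ≤ v.2})
    (hni : ∀ i, i + 1 < k →
      ((u (i + 1)).1, (u i).2) ∉ L + {v : ℝ × ℝ | 0 ≤ v.1 ∧ 0 ≤ v.2})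
    (hnk : (M₁, (u (k - 1)).2) ∉ L + {v : ℝ × ℝ | 0 ≤ v.1 ∧ 0 ≤ v.2}) :
    ∀ y ∈ Y', ∃ i < k, (u i).1 ≤ y.1 ∧ (u i).2 ≤ y.2 := by
  intro y hy
  have hyS := hLB hy
  have hM1 := (hM y hy).1
  have hM2 := (hM y hy).2
  -- (u 0).1 ≤ y.1
  have h0 : (u 0).1 ≤ y.1 := by
    by_contra h
    push_neg at h
    exact hn0 (upclosed_aux L hyS (le_of_lt h) hM2)
  -- largest i < k with (u i).1 ≤ y.1
  set P : ℕ → Prop := fun i => (u i).1 ≤ y.1 with hP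
  classical
  have hP0 : P 0 := h0
  set i := Nat.findGreatest P (k - 1) with hi
  have hik : i < k := lt_of_le_of_lt (Nat.findGreatest_le _) (by omega)
  have hPi : P i := Nat.findGreatest_spec (Nat.zero_le _) hP0
  refine ⟨i, hik, hPi, ?_⟩
  by_cases hlast : i = k - 1
  · -- use hnk
    by_contra h
    push_neg at h
    rw [hlast] at h
    exact hnk (upclosed_aux L hyS hM1 (le_of_lt h))
  · have hik1 : i + 1 < k := by omega
    have hnot : ¬ P (i + 1) :=
      Nat.findGreatest_is_greatest (Nat.lt_succ_self i) (by omega)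
    simp only [hP, not_le] at hnot
    by_contra h
    push_neg at h
    exact hni i hik1 (upclosed_aux L hyS (le_of_lt hnot) (le_of_lt h))
end
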